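/- arXiv:math/0703218 — 2 statements merged into one kernel-verified Lean document; each statement's English description precedes it below -/
import Mathlib

section
/- Let M be a free abelian group (free ℤ-module) of finite rank and let f : M → M be a group automorphism with f ∘ f = id. Then there exist natural numbers a, b, c and a group isomorphism e : M ≅ ℤ^a × ℤ^b × (ℤ × ℤ)^c under which f corresponds to the automorphism acting as the identity on the factor ℤ^a, as negation (x ↦ −x) on the factor ℤ^b, and as the coordinate swap (x, y) ↦ (y, x) on each of the c factors ℤ × ℤ. -/
/-!
Let `P` be the sublattice fixed by `f`. Since `f` acts as `-1` on `M ⧸ P`, which is torsion-free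
and hence free, a section `σ` of `M → M ⧸ P` identifies `f` with `(p, q) ↦ (p + Φ q, -q)` on
`P × (M ⧸ P)`, where `Φ q = σ q + f (σ q)`. Shearing by `τ : M ⧸ P → P` replaces `Φ` by `Φ + 2τ`,
so only `Φ` mod `2` matters. If `Φ ≡ 0`, then `f` is `id × (-1)`. Otherwise some coordinate
functional `ψ` is odd on some `Φ v`, and after a shear `ψ (Φ v) = 1`; then `v` and `Φ v` span a
copy of `ℤ²` on which `f` is conjugate to the swap, with an `f`-stable complement
`ker ψ × ker (ψ ∘ Φ)` of smaller rank, and one concludes by induction on the rank.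
-/

open Function Module

theorem Function.Exact.splitSurjectiveEquiv_symm_apply {R M N P : Type*} [Ring R]
    [AddCommGroup M] [AddCommGroup N] [AddCommGroup P] [Module R M] [Module R N] [Module R P]
    {f : M →ₗ[R] N} {g : N →ₗ[R] P} (h : Exact f g) (hf : Injective f)
    (l : { l // g ∘ₗ l = .id }) (x : M × P) :
    (h.splitSurjectiveEquiv hf l).1.symm x = f x.1 + l.1 x.2 := by
  simp [Exact.splitSurjectiveEquiv]
  rfl

noncomputable def LinearMap.kerProdEquivOfApplyEqOne {R P : Type*} [Ring R] [AddCommGroup P]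
    [Module R P] (ψ : P →ₗ[R] R) {m : P} (hm : ψ m = 1) : P ≃ₗ[R] LinearMap.ker ψ × R :=
  ((LinearMap.exact_subtype_ker_map ψ).splitSurjectiveEquiv (LinearMap.ker ψ).injective_subtype
    ⟨LinearMap.toSpanSingleton R P m, by ext; simp [hm]⟩).1

theorem LinearMap.kerProdEquivOfApplyEqOne_symm_apply {R P : Type*} [Ring R] [AddCommGroup P]
    [Module R P] (ψ : P →ₗ[R] R) {m : P} (hm : ψ m = 1) (x : LinearMap.ker ψ × R) :
    (ψ.kerProdEquivOfApplyEqOne hm).symm x = x.1 + x.2 • m :=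
  Exact.splitSurjectiveEquiv_symm_apply _ _ _ x

theorem Fin.comp_append {α β : Type*} {m n : ℕ} (φ : α → β) (x : Fin m → α) (y : Fin n → α) :
    φ ∘ Fin.append x y = Fin.append (φ ∘ x) (φ ∘ y) := by
  funext i
  refine Fin.addCases (fun i => ?_) (fun i => ?_) i <;> simp

def Fin.appendAddEquiv (V : Type*) [AddCommMonoid V] (m n : ℕ) :
    (Fin m → V) × (Fin n → V) ≃+ (Fin (m + n) → V) :=
  AddEquiv.mk' (Fin.appendEquiv m n) fun x y => by
    funext i
    refine Fin.addCases (fun i => ?_) (fun i => ?_) i <;> simp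

abbrev StandardLattice (a b c : ℕ) : Type := (Fin a → ℤ) × (Fin b → ℤ) × (Fin c → ℤ × ℤ)

def standardInvolution {a b c : ℕ} (x : StandardLattice a b c) : StandardLattice a b c :=
  (x.1, -x.2.1, fun i => (x.2.2 i).swap)

def HasStandardForm {M : Type*} [AddCommGroup M] (f : M → M) : Prop :=
  ∃ (a b c : ℕ) (e : M ≃+ StandardLattice a b c), Semiconj e f standardInvolution

section HasStandardForm

variable {M N : Type*} [AddCommGroup M] [AddCommGroup N] {f : M → M} {g : N → N}

theorem HasStandardForm.of_semiconj (e : N ≃+ M) (he : Semiconj e g f)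
    (hg : HasStandardForm g) : HasStandardForm f := by
  obtain ⟨a, b, c, e', he'⟩ := hg
  exact ⟨a, b, c, e.symm.trans e', (he.inverse_left e.left_inv e.right_inv).trans he'⟩

def StandardLattice.appendEquiv (a b c a' b' c' : ℕ) :
    StandardLattice a b c × StandardLattice a' b' c' ≃+
      StandardLattice (a + a') (b + b') (c + c') :=
  AddEquiv.prodProdProdComm _ _ _ _ |>.trans <|
    (Fin.appendAddEquiv ℤ a a').prodCongr <|
      (AddEquiv.prodProdProdComm _ _ _ _).trans <|
        (Fin.appendAddEquiv ℤ b b').prodCongr (Fin.appendAddEquiv (ℤ × ℤ) c c')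

theorem StandardLattice.appendEquiv_standardInvolution (a b c a' b' c' : ℕ) :
    Semiconj (StandardLattice.appendEquiv a b c a' b' c')
      (Prod.map standardInvolution standardInvolution) standardInvolution := by
  intro x
  refine Prod.ext rfl (Prod.ext ?_ ?_)
  · exact (Fin.comp_append Neg.neg _ _).symm
  · exact (Fin.comp_append Prod.swap _ _).symm

theorem HasStandardForm.prodMap (hf : HasStandardForm f) (hg : HasStandardForm g) :
    HasStandardForm (Prod.map f g) := by
  obtain ⟨a, b, c, e, he⟩ := hf
  obtain ⟨a', b', c', e', he'⟩ := hg
  refine ⟨_, _, _, (e.prodCongr e').trans (StandardLattice.appendEquiv a b c a' b' c'),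
    Semiconj.trans (ga := Prod.map f g) (gb := Prod.map standardInvolution standardInvolution)
      (fab := e.prodCongr e') (fun x => Prod.ext (he x.1) (he' x.2))
      (StandardLattice.appendEquiv_standardInvolution a b c a' b' c')⟩

theorem hasStandardForm_prodMap_id_neg [Free ℤ M] [Module.Finite ℤ M] [Free ℤ N]
    [Module.Finite ℤ N] : HasStandardForm (Prod.map id Neg.neg : M × N → M × N) :=
  ⟨_, _, 0, ((finBasis ℤ M).equivFun.toAddEquiv.prodCongr (finBasis ℤ N).equivFun.toAddEquiv).trans
      ((AddEquiv.refl _).prodCongr AddEquiv.prodUnique.symm),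
    fun x => Prod.ext rfl (Prod.ext (map_neg (finBasis ℤ N).equivFun x.2) (Subsingleton.elim _ _))⟩

end HasStandardForm

section ExtInvolution

variable {P Q : Type*} [AddCommGroup P] [AddCommGroup Q]

def extInvolution (Φ : Q →ₗ[ℤ] P) (x : P × Q) : P × Q :=
  (x.1 + Φ x.2, -x.2)

theorem extInvolution_zero : extInvolution (0 : Q →ₗ[ℤ] P) = Prod.map id Neg.neg := by
  funext x
  simp [extInvolution, Prod.map]

-- `(x, y) ↦ (x, y + x)` conjugates `(x, y) ↦ (x + y, -y)` to the swap.
theorem hasStandardForm_extInvolution_id :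
    HasStandardForm (extInvolution (LinearMap.id : ℤ →ₗ[ℤ] ℤ)) :=
  ⟨0, 0, 1, ((LinearEquiv.refl ℤ ℤ).skewProd (LinearEquiv.refl ℤ ℤ) LinearMap.id).toAddEquiv.trans
      ((AddEquiv.funUnique (Fin 1) (ℤ × ℤ)).symm.trans
        (AddEquiv.uniqueProd.symm.trans AddEquiv.uniqueProd.symm)),
    fun x => by
      refine Prod.ext (Subsingleton.elim _ _) (Prod.ext (Subsingleton.elim _ _) ?_)
      funext i
      simp [extInvolution, standardInvolution, add_comm]⟩

def shearEquiv (τ : Q →ₗ[ℤ] P) : P × Q ≃+ P × Q where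
  toFun x := (x.1 + τ x.2, x.2)
  invFun x := (x.1 - τ x.2, x.2)
  left_inv x := by simp
  right_inv x := by simp
  map_add' x y := by ext <;> simp [add_add_add_comm]

theorem semiconj_shearEquiv_extInvolution (Φ τ : Q →ₗ[ℤ] P) :
    Semiconj (shearEquiv τ) (extInvolution (Φ + 2 • τ)) (extInvolution Φ) := by
  intro x
  ext
  · simp [shearEquiv, extInvolution, two_smul]; abel
  · rfl

theorem HasStandardForm.extInvolution_of_add_two_smul {Φ : Q →ₗ[ℤ] P} (τ : Q →ₗ[ℤ] P)
    (h : HasStandardForm (extInvolution (Φ + 2 • τ))) : HasStandardForm (extInvolution Φ) :=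
  h.of_semiconj _ (semiconj_shearEquiv_extInvolution Φ τ)

theorem HasStandardForm.extInvolution_of_apply_eq_one {Φ : Q →ₗ[ℤ] P} {ψ : P →ₗ[ℤ] ℤ} {v : Q}
    (hv : ψ (Φ v) = 1)
    (h : HasStandardForm (extInvolution (Φ.restrict (p := LinearMap.ker (ψ ∘ₗ Φ))
      (q := LinearMap.ker ψ) fun _ hq => by simpa using hq))) :
    HasStandardForm (extInvolution Φ) := by
  let eP := ψ.kerProdEquivOfApplyEqOne hv
  let eQ := (ψ ∘ₗ Φ).kerProdEquivOfApplyEqOne (m := v) hv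
  refine (h.prodMap hasStandardForm_extInvolution_id).of_semiconj
    ((LinearEquiv.prodProdProdComm ℤ _ _ _ _).trans (eP.symm.prodCongr eQ.symm)).toAddEquiv
    fun x => ?_
  ext
  · simp [eP, eQ, extInvolution, LinearMap.kerProdEquivOfApplyEqOne_symm_apply, add_smul]
    abel
  · simp [eP, eQ, extInvolution, LinearMap.kerProdEquivOfApplyEqOne_symm_apply]
    abel

end ExtInvolution

theorem LinearMap.finrank_ker_add_one_of_apply_eq_one {Q : Type*} [AddCommGroup Q] [Free ℤ Q]
    [Module.Finite ℤ Q] (μ : Q →ₗ[ℤ] ℤ) {v : Q} (hv : μ v = 1) :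
    finrank ℤ (LinearMap.ker μ) + 1 = finrank ℤ Q := by
  rw [(μ.kerProdEquivOfApplyEqOne hv).finrank_eq, finrank_prod, finrank_self]

theorem LinearMap.exists_add_two_smul_eq_zero_or_apply_eq_one {P Q : Type*} [AddCommGroup P]
    [AddCommGroup Q] [Free ℤ P] [Module.Finite ℤ P] [Free ℤ Q] [Module.Finite ℤ Q]
    (Φ : Q →ₗ[ℤ] P) :
    ∃ τ : Q →ₗ[ℤ] P, Φ + 2 • τ = 0 ∨ ∃ (v : Q) (ψ : P →ₗ[ℤ] ℤ), ψ ((Φ + 2 • τ) v) = 1 := by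
  classical
  let bP := Free.chooseBasis ℤ P
  let bQ := Free.chooseBasis ℤ Q
  by_cases heven : ∀ i j, Even (LinearMap.toMatrix bQ bP Φ i j)
  · refine ⟨-Matrix.toLin bQ bP (.of fun i j => LinearMap.toMatrix bQ bP Φ i j / 2), Or.inl ?_⟩
    rw [smul_neg, add_neg_eq_zero]
    apply (LinearMap.toMatrix bQ bP).injective
    ext i j
    simp [Int.mul_ediv_cancel' (even_iff_two_dvd.mp (heven i j))]
  · push Not at heven
    obtain ⟨i, j, hodd⟩ := heven
    obtain ⟨k, hk⟩ := Int.not_even_iff_odd.mp hodd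
    refine ⟨-(bQ.coord j).smulRight (k • bP i), Or.inr ⟨bQ j, bP.coord i, ?_⟩⟩
    rw [LinearMap.toMatrix_apply] at hk
    simp [hk]

theorem hasStandardForm_extInvolution {P Q : Type*} [AddCommGroup P] [AddCommGroup Q] [Free ℤ P]
    [Module.Finite ℤ P] [Free ℤ Q] [Module.Finite ℤ Q] (Φ : Q →ₗ[ℤ] P) :
    HasStandardForm (extInvolution Φ) := by
  induction hn : finrank ℤ Q using Nat.strong_induction_on generalizing P Q with
  | _ n ih =>
    obtain ⟨τ, hzero | ⟨v, ψ, hv⟩⟩ := Φ.exists_add_two_smul_eq_zero_or_apply_eq_one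
    all_goals refine .extInvolution_of_add_two_smul τ ?_
    · rw [hzero, extInvolution_zero]
      exact hasStandardForm_prodMap_id_neg
    · have hrank := (ψ ∘ₗ (Φ + 2 • τ)).finrank_ker_add_one_of_apply_eq_one hv
      exact .extInvolution_of_apply_eq_one hv (ih _ (by omega) _ rfl)

theorem stmt_0 (M : Type*) [AddCommGroup M] [Module.Free ℤ M] [Module.Finite ℤ M]
    (f : M ≃+ M) (hf : ∀ x : M, f (f x) = x) :
    ∃ (a b c : ℕ) (e : M ≃+ ((Fin a → ℤ) × (Fin b → ℤ) × (Fin c → ℤ × ℤ))),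
      ∀ x : M,
        e (f x) = ((e x).1, -(e x).2.1, fun i => ((e x).2.2 i).swap) := by
  let g : M →ₗ[ℤ] M := f.toIntLinearEquiv
  let P := LinearMap.ker (g - 1)
  have hP (p : M) (hp : p ∈ P) : f p = p := by simpa [P, sub_eq_zero, g] using hp
  have : Free ℤ (M ⧸ P) := .of_equiv (g - 1).quotKerEquivRange.symm
  obtain ⟨σ, hσ⟩ := projective_lifting_property P.mkQ LinearMap.id P.mkQ_surjective
  have hσP (q : M ⧸ P) : (σ + g ∘ₗ σ) q ∈ P := by simp [P, g, hf, add_comm]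
  let e := ((LinearMap.exact_subtype_mkQ P).splitSurjectiveEquiv P.injective_subtype ⟨σ, hσ⟩).1
  refine (hasStandardForm_extInvolution ((σ + g ∘ₗ σ).codRestrict P hσP)).of_semiconj
    e.symm.toAddEquiv fun x => ?_
  simp [e, Exact.splitSurjectiveEquiv_symm_apply, extInvolution, g, hP _ x.1.2]
  abel
end

section
/- Let F be a field of characteristic different from 2. If g ∈ GL(4,F) induces the identity map on the exterior square, i.e. (⋀²g)(x) = x for all x ∈ ⋀²(F⁴), then g = I or g = −I. In other words, the kernel of the homomorphism GL(4,F) → GL(⋀²(F⁴)), g ↦ ⋀²g, is exactly {±I}. -/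
/- STATEMENT 13: For `char F ≠ 2`, an element `g ∈ GL(4,F)` induces the identity map on
the exterior square `⋀²(F⁴)` if and only if `g = I` or `g = −I`: the kernel of
`GL(4,F) → GL(⋀²(F⁴))`, `g ↦ ⋀²g`, is exactly `{±I}`. -/

open Matrix ExteriorAlgebra

/-- The exterior square `⋀²(F⁴)`, as the degree-two graded piece of the exterior algebra. -/
noncomputable def extSq (F : Type*) [Field F] : Submodule F (ExteriorAlgebra F (Fin 4 → F)) :=
  (LinearMap.range (ι F : (Fin 4 → F) →ₗ[F] ExteriorAlgebra F (Fin 4 → F))) ^ 2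

/-- The coefficient functional on the exterior algebra extracting the `(i,j)` minor
coordinate on degree two elements. -/
noncomputable def coeffL (F : Type*) [Field F] (i j : Fin 4) :
    ExteriorAlgebra F (Fin 4 → F) →ₗ[F] F :=
  ExteriorAlgebra.liftAlternating
    (Function.update (fun n => (0 : (Fin 4 → F) [⋀^Fin n]→ₗ[F] F)) 2
      ((Matrix.detRowAlternating (R := F) (n := Fin 2)).compLinearMap
        (LinearMap.funLeft F F ![i, j])))

lemma ι_mul_ι_eq_ιMulti (F : Type*) [Field F] (v w : Fin 4 → F) :
    ι F v * ι F w = ιMulti F 2 ![v, w] := by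
  simp [ιMulti_apply, List.ofFn_succ]

lemma coeffL_apply (F : Type*) [Field F] (i j : Fin 4) (v w : Fin 4 → F) :
    coeffL F i j (ι F v * ι F w) = v i * w j - v j * w i := by
  rw [ι_mul_ι_eq_ιMulti, coeffL, ExteriorAlgebra.liftAlternating_apply_ιMulti,
    Function.update_self, AlternatingMap.compLinearMap_apply]
  show (Matrix.of fun k => LinearMap.funLeft F F ![i, j] (![v, w] k)).det = _
  rw [Matrix.det_fin_two]
  simp [LinearMap.funLeft_apply]

lemma mem_extSq (F : Type*) [Field F] (v w : Fin 4 → F) :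
    ι F v * ι F w ∈ extSq F := by
  rw [extSq, pow_two]
  exact Submodule.mul_mem_mul ⟨v, rfl⟩ ⟨w, rfl⟩

lemma map_id_of_wedge (F : Type*) [Field F] (f : (Fin 4 → F) →ₗ[F] (Fin 4 → F))
    (hf : ∀ v w, ι F (f v) * ι F (f w) = ι F v * ι F w) :
    ∀ x ∈ extSq F, ExteriorAlgebra.map f x = x := by
  intro x hx
  rw [extSq, pow_two] at hx
  refine Submodule.mul_induction_on hx ?_ ?_
  · rintro a ⟨v, rfl⟩ b ⟨w, rfl⟩
    rw [_root_.map_mul, ExteriorAlgebra.map_apply_ι, ExteriorAlgebra.map_apply_ι, hf]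
  · intro a b ha hb; rw [map_add, ha, hb]

lemma third (i k : Fin 4) (h : i ≠ k) :
    ∃ l : Fin 4, l ≠ i ∧ l ≠ k := by
  revert h; revert i k; decide

theorem stmt_13 (F : Type*) [Field F] (h2 : (2 : F) ≠ 0) (g : GL (Fin 4) F) :
    (∀ x ∈ extSq F,
        ExteriorAlgebra.map (Matrix.mulVecLin (g : Matrix (Fin 4) (Fin 4) F)) x = x)
      ↔ ((g : Matrix (Fin 4) (Fin 4) F) = 1 ∨ (g : Matrix (Fin 4) (Fin 4) F) = -1) := by
  set A : Matrix (Fin 4) (Fin 4) F := (g : Matrix (Fin 4) (Fin 4) F) with hA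
  constructor
  · intro h
    -- extract minor equations
    have minors : ∀ i j k l : Fin 4,
        A i k * A j l - A j k * A i l =
          (if i = k then (1:F) else 0) * (if j = l then 1 else 0) -
          (if j = k then (1:F) else 0) * (if i = l then 1 else 0) := by
      intro i j k l
      have hw := h _ (mem_extSq F (Pi.single k 1) (Pi.single l 1))
      rw [_root_.map_mul, ExteriorAlgebra.map_apply_ι, ExteriorAlgebra.map_apply_ι] at hw
      have := congrArg (coeffL F i j) hw
      rw [coeffL_apply, coeffL_apply] at this
      simpa [Matrix.mulVecLin_apply, Matrix.mulVec_single, Pi.single_apply, eq_comm]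
        using this
    -- off-diagonal entries vanish
    have offdiag : ∀ i k : Fin 4, i ≠ k → A i k = 0 := by
      intro i k hik
      obtain ⟨l, hli, hlk⟩ := third i k hik
      have hkl : k ≠ l := Ne.symm hlk
      have hil : i ≠ l := Ne.symm hli
      have h1 : A i k * A k l - A k k * A i l = 0 := by
        simpa [hik, hkl, hil] using minors i k k l
      have hb : A i k * A l l - A l k * A i l = 0 := by
        simpa [hik, hlk, hil] using minors i l k l
      have h3 : A k k * A l l - A l k * A k l = 1 := by
        simpa [hlk, hkl] using minors k l k l
      linear_combination (-A i k) * h3 + A k k * hb - A l k * h1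
    -- diagonal entries
    have diag : ∀ i j : Fin 4, i ≠ j → A i i * A j j = 1 := by
      intro i j hij
      have h3 := minors i j i j
      have h4 := offdiag j i (Ne.symm hij)
      simp [hij, Ne.symm hij, h4] at h3
      exact h3
    have d01 := diag 0 1 (by decide)
    have d02 := diag 0 2 (by decide)
    have d12 := diag 1 2 (by decide)
    have d13 := diag 1 3 (by decide)
    -- all diagonal entries equal, square to 1
    have hA0 : A 0 0 ≠ 0 := fun h0 => by simp [h0] at d01
    have hA1 : A 1 1 ≠ 0 := fun h0 => by simp [h0] at d12
    have hA2 : A 2 2 ≠ 0 := fun h0 => by simp [h0] at d12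
    have e12 : A 1 1 = A 2 2 := mul_left_cancel₀ hA0 (d01.trans d02.symm)
    have e01 : A 0 0 = A 1 1 := mul_right_cancel₀ hA2 (d02.trans d12.symm)
    have e13 : A 1 1 = A 3 3 := by
      have := mul_left_cancel₀ hA1 (d12.trans d13.symm)
      rw [e12, this]
    have hsq : A 0 0 * A 0 0 = 1 := by rw [e01] at d01 ⊢; exact d01
    have hd : A 0 0 = 1 ∨ A 0 0 = -1 := mul_self_eq_one_iff.mp hsq
    have hdi : ∀ i : Fin 4, A i i = A 0 0 := by
      intro i; fin_cases i
      · rfl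
      · exact e01.symm
      · exact (e01.trans e12).symm
      · exact (e01.trans e13).symm
    have hAeq : A = A 0 0 • (1 : Matrix (Fin 4) (Fin 4) F) := by
      ext i j
      by_cases hij : i = j
      · subst hij
        simp [Matrix.smul_apply, Matrix.one_apply_eq, hdi i]
      · simp [Matrix.smul_apply, Matrix.one_apply_ne hij, offdiag i j hij]
    rcases hd with h1 | h1
    · left; rw [hAeq, h1, one_smul]
    · right; rw [hAeq, h1]; simp
  · rintro (h1 | h1)
    · rw [h1]
      intro x _
      simp [Matrix.mulVecLin_one]
    · rw [h1]
      refine map_id_of_wedge F _ ?_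
      intro v w
      have hv : (Matrix.mulVecLin (-1 : Matrix (Fin 4) (Fin 4) F)) v = -v := by
        simp [Matrix.mulVecLin_apply, Matrix.neg_mulVec, Matrix.one_mulVec]
      have hw : (Matrix.mulVecLin (-1 : Matrix (Fin 4) (Fin 4) F)) w = -w := by
        simp [Matrix.mulVecLin_apply, Matrix.neg_mulVec, Matrix.one_mulVec]
      rw [hv, hw, map_neg, map_neg, neg_mul_neg]
end
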